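/- arXiv:2206.12761 — 4 statements merged into one kernel-verified Lean document; each statement's English description precedes it below -/
import Mathlib

section
/- Let p ∈ (0,1), T_c > 0, a > 0, Θ > 0, and μ ∈ (0,1). Let V : ℝ → ℝ be differentiable with V(t) ≥ 0 for all t ≥ 0, and suppose that for all t ≥ 0 the derivative satisfies V'(t) ≤ -(1/(p·T_c))·e^{a·V(t)^p}·V(t)^{1-p} + Θ. Then there exists a time t* ∈ [0, T_c/(a·μ)] such that e^{a·V(t*)^p}·V(t*)^{1-p} ≤ p·T_c·Θ/(1-μ). (Practical predefined-time stability: the trajectory reaches the residual set {x : e^{a·V(x)^p}·V(x)^{1-p} ≤ p·T_c·Θ/(1-μ)} within the predefined time T_c/(a·μ).) -/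
/-!
Argue by contradiction: suppose `S(t) = e^{a V(t)^p} V(t)^{1-p}` exceeds `p T_c Θ / (1 - μ)`
on the whole interval `[0, T_c / (a μ)]`. Then `V > 0` there, and the perturbation `Θ` eats at
most a fraction `1 - μ` of the decay, so `V' ≤ -(μ / (p T_c)) S`. Along `V` the transform
`e^{-a V^p}` then grows with slope at least `a μ / T_c`, hence gains at least `1` over the
interval; but it starts positive and never exceeds `1`.
-/

open Real Set

lemma mul_sub_le_sub_of_hasDerivAt_of_le {f f' : ℝ → ℝ} {C x y : ℝ} (hxy : x ≤ y)
    (hf : ∀ t ∈ Icc x y, HasDerivAt f (f' t) t) (hC : ∀ t ∈ Ioo x y, C ≤ f' t) :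
    C * (y - x) ≤ f y - f x := by
  have hD : interior (Icc x y) = Ioo x y := interior_Icc
  refine (convex_Icc x y).mul_sub_le_image_sub_of_le_deriv
    (fun t ht => (hf t ht).continuousAt.continuousWithinAt)
    (fun t ht => (hf t (interior_subset ht)).differentiableAt.differentiableWithinAt)
    (fun t ht => ?_) x (left_mem_Icc.2 hxy) y (right_mem_Icc.2 hxy) hxy
  rw [(hf t (interior_subset ht)).deriv]
  exact hC t (hD ▸ ht)

section ExpNegMulRpow

variable {a p : ℝ}

lemma hasDerivAt_exp_neg_mul_rpow {V : ℝ → ℝ} {V' x : ℝ} (hV : HasDerivAt V V' x)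
    (hx : V x ≠ 0) :
    HasDerivAt (fun t => exp (-(a * V t ^ p)))
      (exp (-(a * V x ^ p)) * -(a * (V' * p * V x ^ (p - 1)))) x :=
  ((hV.rpow_const (Or.inl hx)).const_mul a).neg.exp

lemma mul_le_exp_neg_mul_rpow_mul_of_le {v d k : ℝ} (hv : 0 < v) (hap : 0 ≤ a * p)
    (hd : d ≤ -k * (exp (a * v ^ p) * v ^ (1 - p))) :
    a * p * k ≤ exp (-(a * v ^ p)) * -(a * (d * p * v ^ (p - 1))) := by
  have hinv : exp (-(a * v ^ p)) * v ^ (p - 1) * (exp (a * v ^ p) * v ^ (1 - p)) = 1 := by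
    rw [mul_mul_mul_comm, ← exp_add, ← rpow_add hv]
    norm_num
  have hw : 0 ≤ exp (-(a * v ^ p)) * v ^ (p - 1) := by positivity
  calc a * p * k
        = a * p * (exp (-(a * v ^ p)) * v ^ (p - 1)) * (k * (exp (a * v ^ p) * v ^ (1 - p))) := by
        linear_combination (-(a * p * k)) * hinv
    _ ≤ a * p * (exp (-(a * v ^ p)) * v ^ (p - 1)) * -d :=
        mul_le_mul_of_nonneg_left (by linarith) (mul_nonneg hap hw)
    _ = exp (-(a * v ^ p)) * -(a * (d * p * v ^ (p - 1))) := by ring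

end ExpNegMulRpow

lemma le_neg_div_mul_of_div_one_sub_lt {q Θ μ S d : ℝ} (hq : 0 < q) (hμ : μ < 1)
    (hS : q * Θ / (1 - μ) < S) (hd : d ≤ -(1 / q) * S + Θ) : d ≤ -(μ / q) * S := by
  have hΘ : Θ < (1 - μ) * S / q := by
    rw [lt_div_iff₀ hq]
    rw [div_lt_iff₀ (by linarith)] at hS
    linarith
  have : -(1 / q) * S + (1 - μ) * S / q = -(μ / q) * S := by field_simp; ring
  linarith

theorem practical_predefined_time_stability
    (p T_c a Θ μ : ℝ) (hp : p ∈ Set.Ioo (0 : ℝ) 1) (hT : 0 < T_c) (ha : 0 < a)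
    (hΘ : 0 < Θ) (hμ : μ ∈ Set.Ioo (0 : ℝ) 1)
    (V : ℝ → ℝ) (hV : Differentiable ℝ V) (hVnn : ∀ t ≥ 0, 0 ≤ V t)
    (hdV : ∀ t ≥ 0, deriv V t ≤
      -(1 / (p * T_c)) * Real.exp (a * (V t) ^ p) * (V t) ^ (1 - p) + Θ) :
    ∃ t ∈ Set.Icc (0 : ℝ) (T_c / (a * μ)),
      Real.exp (a * (V t) ^ p) * (V t) ^ (1 - p) ≤ p * T_c * Θ / (1 - μ) := by
  obtain ⟨hp0, hp1⟩ := hp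
  obtain ⟨hμ0, hμ1⟩ := hμ
  set T := T_c / (a * μ)
  have hT0 : 0 ≤ T := by positivity
  by_contra! hcon
  have hVpos : ∀ t ∈ Icc 0 T, 0 < V t := fun t ht => (hVnn t ht.1).lt_of_ne' fun h0 => by
    have := hcon t ht
    rw [h0, zero_rpow (sub_pos.2 hp1).ne', mul_zero] at this
    exact this.not_ge (div_nonneg (by positivity) (by linarith))
  have hslope : ∀ t ∈ Ioo 0 T, a * μ / T_c ≤
      exp (-(a * V t ^ p)) * -(a * (deriv V t * p * V t ^ (p - 1))) := fun t ht => by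
    have hdecay := le_neg_div_mul_of_div_one_sub_lt (by positivity) hμ1
      (hcon t (Ioo_subset_Icc_self ht)) (mul_assoc (-(1 / (p * T_c))) _ _ ▸ hdV t ht.1.le)
    convert mul_le_exp_neg_mul_rpow_mul_of_le (hVpos t (Ioo_subset_Icc_self ht))
      (by positivity) hdecay using 1
    field_simp
  have hgain := mul_sub_le_sub_of_hasDerivAt_of_le hT0
    (fun t ht => hasDerivAt_exp_neg_mul_rpow (hV t).hasDerivAt (hVpos t ht).ne') hslope
  have hT1 : a * μ / T_c * (T - 0) = 1 := by simp only [T, sub_zero]; field_simp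
  have hend : exp (-(a * V T ^ p)) ≤ 1 :=
    exp_le_one_iff.2 (neg_nonpos.2 (mul_nonneg ha.le (rpow_nonneg (hVnn T hT0) p)))
  linarith [exp_pos (-(a * V 0 ^ p))]
end

section
/- Let p ∈ (0,1) and let V_1, V_2, V_3 be nonnegative real numbers. Then Σ_{j=1}^{3} e^{V_j^p}·V_j^{1-p} ≥ e^{(1/3)·(V_1+V_2+V_3)^p}·(V_1+V_2+V_3)^{1-p}. -/
/-!
For `n` nonnegative reals `V i` write `a i = V i ^ p`, `b i = V i ^ (1 - p)` and `S = ∑ V i`.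
Since `t ↦ t ^ p` and `t ↦ t ^ (1 - p)` are subadditive, `S ^ p ≤ ∑ a i` and
`S ^ (1 - p) ≤ ∑ b i`. Jensen for `exp` bounds `exp (S ^ p / n)` by the mean of the `exp (a i)`,
and as `exp (a i)` and `b i` both increase with `V i`, Chebyshev's sum inequality bounds that mean
times `∑ b i` by `∑ exp (a i) * b i`.
-/

open Finset Real

namespace Real

variable {ι : Type*} {s : Finset ι} {p : ℝ}

theorem rpow_sum_le_sum_rpow {V : ι → ℝ} (hV : ∀ i ∈ s, 0 ≤ V i) (hp₀ : 0 < p) (hp₁ : p ≤ 1) :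
    (∑ i ∈ s, V i) ^ p ≤ ∑ i ∈ s, V i ^ p :=
  le_sum_of_subadditive_on_pred (· ^ p) (0 ≤ ·) (zero_rpow hp₀.ne').le
    (fun _ _ hx hy ↦ rpow_add_le_add_rpow hx hy hp₀.le hp₁) (fun _ _ ↦ add_nonneg) V hV

theorem exp_inv_card_mul_sum_le (hs : s.Nonempty) (x : ι → ℝ) :
    exp ((#s : ℝ)⁻¹ * ∑ i ∈ s, x i) ≤ (#s : ℝ)⁻¹ * ∑ i ∈ s, exp (x i) := by
  have hw : ∑ _i ∈ s, (#s : ℝ)⁻¹ = 1 := by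
    rw [sum_const, nsmul_eq_mul, mul_inv_cancel₀ (by simpa using hs.ne_empty)]
  simpa only [mul_sum, smul_eq_mul] using
    convexOn_exp.map_sum_le (fun _ _ ↦ by positivity) hw (fun _ _ ↦ Set.mem_univ (x _))

theorem monovaryOn_exp_rpow_rpow {V : ι → ℝ} {t : Set ι} (hV : ∀ i ∈ t, 0 ≤ V i)
    (hp₀ : 0 ≤ p) (hp₁ : p < 1) :
    MonovaryOn (fun i ↦ exp (V i ^ p)) (fun i ↦ V i ^ (1 - p)) t := by
  intro i hi j hj hij
  have hlt : V i < V j := (rpow_lt_rpow_iff (hV i hi) (hV j hj) (by linarith)).1 hij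
  exact exp_le_exp.2 (rpow_le_rpow (hV i hi) hlt.le hp₀)

theorem exp_inv_card_mul_rpow_sum_mul_rpow_sum_le {V : ι → ℝ} (hV : ∀ i ∈ s, 0 ≤ V i)
    (hp₀ : 0 < p) (hp₁ : p < 1) :
    exp ((#s : ℝ)⁻¹ * (∑ i ∈ s, V i) ^ p) * (∑ i ∈ s, V i) ^ (1 - p) ≤
      ∑ i ∈ s, exp (V i ^ p) * V i ^ (1 - p) := by
  rcases s.eq_empty_or_nonempty with rfl | hs
  · simp [zero_rpow (sub_pos.2 hp₁).ne']
  have hcard : (0 : ℝ) < #s := by simpa using hs.card_pos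
  calc exp ((#s : ℝ)⁻¹ * (∑ i ∈ s, V i) ^ p) * (∑ i ∈ s, V i) ^ (1 - p)
      ≤ ((#s : ℝ)⁻¹ * ∑ i ∈ s, exp (V i ^ p)) * ∑ i ∈ s, V i ^ (1 - p) := by
        gcongr
        · exact rpow_nonneg (sum_nonneg hV) _
        · calc exp ((#s : ℝ)⁻¹ * (∑ i ∈ s, V i) ^ p)
              ≤ exp ((#s : ℝ)⁻¹ * ∑ i ∈ s, V i ^ p) := by
                gcongr; exact rpow_sum_le_sum_rpow hV hp₀ hp₁.le
            _ ≤ _ := exp_inv_card_mul_sum_le hs _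
        · exact rpow_sum_le_sum_rpow hV (by linarith) (by linarith)
    _ ≤ ∑ i ∈ s, exp (V i ^ p) * V i ^ (1 - p) := by
        rw [mul_assoc, inv_mul_le_iff₀ hcard]
        exact (monovaryOn_exp_rpow_rpow hV hp₀.le hp₁).sum_mul_sum_le_card_mul_sum

end Real

theorem sum_exp_rpow_ge (p : ℝ) (hp : p ∈ Set.Ioo (0 : ℝ) 1)
    (V₁ V₂ V₃ : ℝ) (h₁ : 0 ≤ V₁) (h₂ : 0 ≤ V₂) (h₃ : 0 ≤ V₃) :
    Real.exp (V₁ ^ p) * V₁ ^ (1 - p) + Real.exp (V₂ ^ p) * V₂ ^ (1 - p) +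
        Real.exp (V₃ ^ p) * V₃ ^ (1 - p) ≥
      Real.exp ((1 / 3) * (V₁ + V₂ + V₃) ^ p) * (V₁ + V₂ + V₃) ^ (1 - p) := by
  have hV : ∀ i ∈ (univ : Finset (Fin 3)), 0 ≤ ![V₁, V₂, V₃] i := by
    simp [Fin.forall_fin_succ, h₁, h₂, h₃]
  simpa [Fin.sum_univ_three] using exp_inv_card_mul_rpow_sum_mul_rpow_sum_le hV hp.1 hp.2
end

section
/- Let δ > 0 and θ ∈ (0, π/2). Define g : (1-δ, 1+δ) → ℝ by g(z) = z + tan(θ)·tan((π/(2δ))·(z-1)). Then g is strictly monotonically increasing on (1-δ, 1+δ) and maps (1-δ, 1+δ) bijectively onto ℝ. In particular, for every z_s ∈ ℝ the equation z_0 + tan((π/(2δ))·(z_0-1))·tan(θ) = z_s has a unique solution z_0 ∈ (1-δ, 1+δ). (Global non-singularity of the shear mapping-based error transformation.) -/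
/-!
The affine change of variable `z = a + (2δ/π) · arctan t` maps `ℝ` onto `(a - δ, a + δ)` and turns
`z + c · tan (π/(2δ) · (z - a))` into `a + (2δ/π) · arctan t + c · t`: a bounded continuous function
plus a linear one of positive slope, hence a surjection onto `ℝ`. Monotonicity is clear since the
tangent increases on `(-π/2, π/2)`.
-/

open Real Set Filter

section ShearedTangent

variable {a δ c : ℝ}

lemma mul_sub_mem_Ioo_neg_pi_div_two_pi_div_two (hδ : 0 < δ) {z : ℝ}
    (hz : z ∈ Ioo (a - δ) (a + δ)) : π / (2 * δ) * (z - a) ∈ Ioo (-(π / 2)) (π / 2) := by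
  have hk : 0 < π / (2 * δ) := by positivity
  have hkδ : π / (2 * δ) * δ = π / 2 := by field_simp
  constructor <;> nlinarith [hz.1, hz.2]

lemma add_mul_arctan_mem_Ioo (hδ : 0 < δ) (t : ℝ) :
    a + 2 * δ / π * arctan t ∈ Ioo (a - δ) (a + δ) := by
  obtain ⟨hlo, hhi⟩ := arctan_mem_Ioo t
  have hk : 0 < 2 * δ / π := by positivity
  have hkπ : 2 * δ / π * (π / 2) = δ := by field_simp
  constructor <;> nlinarith

lemma mul_add_mul_arctan_sub (hδ : 0 < δ) (t : ℝ) :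
    π / (2 * δ) * (a + 2 * δ / π * arctan t - a) = arctan t := by
  field_simp
  ring

theorem strictMonoOn_add_mul_tan (hδ : 0 < δ) (hc : 0 ≤ c) :
    StrictMonoOn (fun z => z + c * tan (π / (2 * δ) * (z - a))) (Ioo (a - δ) (a + δ)) := by
  refine strictMonoOn_id.add_monotone fun x hx y hy hxy => ?_
  have hk : 0 < π / (2 * δ) := by positivity
  gcongr c * ?_
  exact strictMonoOn_tan.monotoneOn (mul_sub_mem_Ioo_neg_pi_div_two_pi_div_two hδ hx)
    (mul_sub_mem_Ioo_neg_pi_div_two_pi_div_two hδ hy) (by gcongr)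

theorem surjOn_add_mul_tan (hδ : 0 < δ) (hc : 0 < c) :
    SurjOn (fun z => z + c * tan (π / (2 * δ) * (z - a))) (Ioo (a - δ) (a + δ)) univ := by
  set φ : ℝ → ℝ := fun t => a + 2 * δ / π * arctan t
  have hφ : Continuous φ := continuous_const.add (continuous_const.mul continuous_arctan)
  have hlinear_top : Tendsto (fun t : ℝ => c * t) atTop atTop := tendsto_id.const_mul_atTop hc
  have hlinear_bot : Tendsto (fun t : ℝ => c * t) atBot atBot := tendsto_id.const_mul_atBot hc
  have hsurj : Function.Surjective fun t => φ t + c * t :=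
    (hφ.add (continuous_const.mul continuous_id)).surjective
      (tendsto_atTop_add_left_of_le _ (a - δ) (fun t => (add_mul_arctan_mem_Ioo hδ t).1.le)
        hlinear_top)
      (tendsto_atBot_add_left_of_ge _ (a + δ) (fun t => (add_mul_arctan_mem_Ioo hδ t).2.le)
        hlinear_bot)
  intro y _
  obtain ⟨t, rfl⟩ := hsurj y
  exact ⟨φ t, add_mul_arctan_mem_Ioo hδ t, by simp only [φ, mul_add_mul_arctan_sub hδ, tan_arctan]⟩

theorem bijOn_add_mul_tan (hδ : 0 < δ) (hc : 0 < c) :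
    BijOn (fun z => z + c * tan (π / (2 * δ) * (z - a))) (Ioo (a - δ) (a + δ)) univ :=
  ⟨mapsTo_univ _ _, (strictMonoOn_add_mul_tan hδ hc.le).injOn, surjOn_add_mul_tan hδ hc⟩

end ShearedTangent

theorem Set.BijOn.existsUnique {α β : Type*} {f : α → β} {s : Set α} {t : Set β}
    (h : BijOn f s t) {y : β} (hy : y ∈ t) : ∃! x, x ∈ s ∧ f x = y := by
  obtain ⟨x, hx, rfl⟩ := h.surjOn hy
  exact ⟨x, ⟨hx, rfl⟩, fun x' ⟨hx', hfx'⟩ => h.injOn hx' hx hfx'⟩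

open Real in
theorem shear_mapping_global_nonsingular (δ θ : ℝ) (hδ : 0 < δ)
    (hθ : θ ∈ Set.Ioo (0 : ℝ) (π / 2)) :
    StrictMonoOn (fun z : ℝ => z + Real.tan θ * Real.tan (π / (2 * δ) * (z - 1)))
        (Set.Ioo (1 - δ) (1 + δ)) ∧
    Set.BijOn (fun z : ℝ => z + Real.tan θ * Real.tan (π / (2 * δ) * (z - 1)))
        (Set.Ioo (1 - δ) (1 + δ)) Set.univ ∧
    ∀ z_s : ℝ, ∃! z₀ : ℝ, z₀ ∈ Set.Ioo (1 - δ) (1 + δ) ∧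
      z₀ + Real.tan (π / (2 * δ) * (z₀ - 1)) * Real.tan θ = z_s := by
  have hc : 0 < tan θ := tan_pos_of_pos_of_lt_pi_div_two hθ.1 hθ.2
  have hbij := bijOn_add_mul_tan (a := 1) hδ hc
  refine ⟨strictMonoOn_add_mul_tan hδ hc.le, hbij, fun z_s => ?_⟩
  simp_rw [mul_comm _ (tan θ)]
  exact hbij.existsUnique (mem_univ z_s)
end

section
/- Let δ > 0 and θ ∈ (0, π/2). Let g : (1-δ, 1+δ) → ℝ, g(z) = z + tan(θ)·tan((π/(2δ))·(z-1)), which is a strictly increasing bijection onto ℝ, and let g⁻¹ : ℝ → (1-δ, 1+δ) denote its inverse. Fix z_0 ∈ (1-δ, 1+δ), set z_s = g(z_0) and ε = tan((π/(2δ))·(z_0-1)). Then the transformed-error function ε_s(w) = tan((π/(2δ))·(g⁻¹(w)-1)) is differentiable at z_s with derivative ε_s'(z_s) = P_0/(1 + P_0·tan(θ)) = π·(ε²+1)/(π·(ε²+1)·tan(θ) + 2δ), where P_0 = (π/(2δ))·(ε²+1). -/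
/-!
Written in the error coordinate `e = tan ((π / (2δ)) (z - 1))`, the shear map becomes
`e ↦ 1 + (2δ/π) arctan e + tan θ · e`, a smooth strictly increasing function whose right inverse
is `ε_s`. The inverse function theorem then gives `ε_s'(z_s) = (2δ / (π (1 + ε²)) + tan θ)⁻¹`.
-/

open Real Set

theorem HasDerivAt.of_strictMono_of_rightInverse {f g : ℝ → ℝ} {f' : ℝ} (a : ℝ)
    (hf_mono : StrictMono f) (hfg : Function.RightInverse g f)
    (hf : HasDerivAt f f' (g a)) (hf' : f' ≠ 0) : HasDerivAt g f'⁻¹ a :=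
  have hg : Continuous g := (hf_mono.orderIsoOfRightInverse f g hfg).symm.continuous
  hf.of_local_left_inverse hg.continuousAt hf' (Filter.Eventually.of_forall hfg)

noncomputable def shearOfError (δ k e : ℝ) : ℝ := 1 + 2 * δ / π * arctan e + k * e

section shearOfError

variable {δ : ℝ}

theorem mul_sub_one_mem_Ioo_neg_pi_div_two_pi_div_two (hδ : 0 < δ) {z : ℝ}
    (hz : z ∈ Ioo (1 - δ) (1 + δ)) : π / (2 * δ) * (z - 1) ∈ Ioo (-(π / 2)) (π / 2) := by
  have hc : 0 < π / (2 * δ) := by positivity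
  have hcδ : π / (2 * δ) * δ = π / 2 := by field_simp
  constructor <;> nlinarith [hz.1, hz.2]

theorem shearOfError_tan (hδ : 0 < δ) (k : ℝ) {z : ℝ} (hz : z ∈ Ioo (1 - δ) (1 + δ)) :
    shearOfError δ k (tan (π / (2 * δ) * (z - 1))) = z + k * tan (π / (2 * δ) * (z - 1)) := by
  obtain ⟨hlo, hhi⟩ := mul_sub_one_mem_Ioo_neg_pi_div_two_pi_div_two hδ hz
  rw [shearOfError, arctan_tan hlo hhi]
  field_simp
  ring

theorem shearOfError_strictMono (hδ : 0 < δ) {k : ℝ} (hk : 0 ≤ k) :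
    StrictMono (shearOfError δ k) := by
  intro x y hxy
  have harctan : 2 * δ / π * arctan x < 2 * δ / π * arctan y :=
    mul_lt_mul_of_pos_left (arctan_strictMono hxy) (by positivity)
  have hlin : k * x ≤ k * y := mul_le_mul_of_nonneg_left hxy.le hk
  simp only [shearOfError]
  linarith

theorem hasDerivAt_shearOfError (δ k e : ℝ) :
    HasDerivAt (shearOfError δ k) (2 * δ / π * (1 / (1 + e ^ 2)) + k) e :=
  (((hasDerivAt_arctan e).const_mul (2 * δ / π)).const_add 1).add
    (by simpa using (hasDerivAt_id e).const_mul k)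

end shearOfError

open Real in
theorem shear_mapping_derivative (δ θ : ℝ) (hδ : 0 < δ)
    (hθ : θ ∈ Set.Ioo (0 : ℝ) (π / 2))
    (g : ℝ → ℝ) (hg : ∀ z, g z = z + Real.tan θ * Real.tan (π / (2 * δ) * (z - 1)))
    (ginv : ℝ → ℝ)
    (hginv_mem : ∀ w, ginv w ∈ Set.Ioo (1 - δ) (1 + δ))
    (hginv_right : ∀ w, g (ginv w) = w)
    (hginv_left : ∀ z ∈ Set.Ioo (1 - δ) (1 + δ), ginv (g z) = z)
    (z₀ : ℝ) (hz₀ : z₀ ∈ Set.Ioo (1 - δ) (1 + δ))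
    (z_s ε : ℝ) (hzs : z_s = g z₀) (hε : ε = Real.tan (π / (2 * δ) * (z₀ - 1))) :
    HasDerivAt (fun w => Real.tan (π / (2 * δ) * (ginv w - 1)))
        (π * (ε ^ 2 + 1) / (π * (ε ^ 2 + 1) * Real.tan θ + 2 * δ)) z_s ∧
    π * (ε ^ 2 + 1) / (π * (ε ^ 2 + 1) * Real.tan θ + 2 * δ) =
      (π / (2 * δ) * (ε ^ 2 + 1)) /
        (1 + (π / (2 * δ) * (ε ^ 2 + 1)) * Real.tan θ) := by
  have hk : 0 < tan θ := tan_pos_of_pos_of_lt_pi_div_two hθ.1 hθ.2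
  have hright : Function.RightInverse (fun w => tan (π / (2 * δ) * (ginv w - 1)))
      (shearOfError δ (tan θ)) := fun w => by
    rw [shearOfError_tan hδ _ (hginv_mem w), ← hg, hginv_right]
  have hεzs : tan (π / (2 * δ) * (ginv z_s - 1)) = ε := by rw [hzs, hginv_left z₀ hz₀, hε]
  have hderiv : HasDerivAt (shearOfError δ (tan θ)) (2 * δ / π * (1 / (1 + ε ^ 2)) + tan θ)
      (tan (π / (2 * δ) * (ginv z_s - 1))) := hεzs ▸ hasDerivAt_shearOfError δ (tan θ) ε
  have hval : (2 * δ / π * (1 / (1 + ε ^ 2)) + tan θ)⁻¹ =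
      π * (ε ^ 2 + 1) / (π * (ε ^ 2 + 1) * tan θ + 2 * δ) := by
    field_simp
    ring
  refine ⟨?_, by field_simp; ring⟩
  exact hval ▸ HasDerivAt.of_strictMono_of_rightInverse z_s (shearOfError_strictMono hδ hk.le)
    hright hderiv (by positivity)
end
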